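/- arXiv:1407.1503 — 3 statements merged into one kernel-verified Lean document; each statement's English description precedes it below -/
import Mathlib

section
/- Let K be a complex Hilbert space, A, A_ζ : K → K bounded operators, 𝕏 : K → K a boundedly invertible operator, B : ℂ^d → K and C : K → ℂ^d bounded maps, and σ1 an invertible d×d complex matrix, and assume the Lyapunov equation A 𝕏 + 𝕏 A_ζ + B σ1 C = 0 holds. Then for every λ ∈ ℂ such that λI − A and λI + A_ζ are boundedly invertible, the d×d matrices S(λ) = I − C 𝕏⁻¹ (λI − A)⁻¹ B σ1 and T(λ) = I + C (λI + A_ζ)⁻¹ 𝕏⁻¹ B σ1 are mutually inverse: S(λ) T(λ) = I and T(λ) S(λ) = I. -/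
noncomputable section

open ContinuousLinearMap

/-- The coefficient space `ℂ^d`. -/
abbrev Ed (d : ℕ) : Type := EuclideanSpace ℂ (Fin d)

/-- A `d × d` complex matrix viewed as a continuous linear map on `ℂ^d`. -/
def m2c {d : ℕ} (σ : Matrix (Fin d) (Fin d) ℂ) : Ed d →L[ℂ] Ed d :=
  Matrix.toEuclideanCLM (𝕜 := ℂ) σ

/-- A continuous linear map on `ℂ^d` viewed as a `d × d` complex matrix. -/
def c2m {d : ℕ} (T : Ed d →L[ℂ] Ed d) : Matrix (Fin d) (Fin d) ℂ :=
  (Matrix.toEuclideanCLM (𝕜 := ℂ)).symm T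

/-- Partial derivative in the first (space) variable. -/
def pdx {M : Type*} [NormedAddCommGroup M] [NormedSpace ℝ M]
    (F : ℝ × ℝ → M) (p : ℝ × ℝ) : M :=
  deriv (fun x => F (x, p.2)) p.1

/-- Partial derivative in the second (time) variable. -/
def pdt {M : Type*} [NormedAddCommGroup M] [NormedSpace ℝ M]
    (F : ℝ × ℝ → M) (p : ℝ × ℝ) : M :=
  deriv (fun t => F (p.1, t)) p.2

/-- Entrywise partial derivative in `x` of a matrix-valued function. -/
def pdxM {d : ℕ} (F : ℝ × ℝ → Matrix (Fin d) (Fin d) ℂ) (p : ℝ × ℝ) :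
    Matrix (Fin d) (Fin d) ℂ :=
  Matrix.of fun i j => pdx (fun q => F q i j) p

/-- Entrywise partial derivative in `t` of a matrix-valued function. -/
def pdtM {d : ℕ} (F : ℝ × ℝ → Matrix (Fin d) (Fin d) ℂ) (p : ℝ × ℝ) :
    Matrix (Fin d) (Fin d) ℂ :=
  Matrix.of fun i j => pdt (fun q => F q i j) p

/-- A regular vessel with inner (Krein/Hilbert) space `K` and coefficient space `ℂ^d`. -/
structure Vessel (K : Type*) [NormedAddCommGroup K] [InnerProductSpace ℂ K]
    [CompleteSpace K] (d : ℕ) where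
  Ω : Set (ℝ × ℝ)
  hΩ : IsOpen Ω
  A : K →L[ℂ] K
  Aζ : K →L[ℂ] K
  B : ℝ × ℝ → Ed d →L[ℂ] K
  C : ℝ × ℝ → K →L[ℂ] Ed d
  X : ℝ × ℝ → K →L[ℂ] K
  /-- pointwise inverse of `X` -/
  Xi : ℝ × ℝ → K →L[ℂ] K
  σ1 : Matrix (Fin d) (Fin d) ℂ
  σ2 : Matrix (Fin d) (Fin d) ℂ
  γ : Matrix (Fin d) (Fin d) ℂ
  γs : ℝ × ℝ → Matrix (Fin d) (Fin d) ℂ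
  hσ1 : IsUnit σ1
  smoothB : ContDiffOn ℝ 2 B Ω
  smoothC : ContDiffOn ℝ 2 C Ω
  smoothX : ContDiffOn ℝ 2 X Ω
  hXinv : ∀ p ∈ Ω, X p ∘L Xi p = (1 : K →L[ℂ] K) ∧ Xi p ∘L X p = (1 : K →L[ℂ] K)
  eqBx : ∀ p ∈ Ω,
    pdx B p ∘L m2c σ1 + A ∘L B p ∘L m2c σ2 + B p ∘L m2c γ = 0
  eqBt : ∀ p ∈ Ω, pdt B p = Complex.I • (A ∘L pdx B p)
  eqCx : ∀ p ∈ Ω,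
    m2c σ1 ∘L pdx C p + m2c σ2 ∘L C p ∘L Aζ - m2c γ ∘L C p = 0
  eqCt : ∀ p ∈ Ω, pdt C p = (-Complex.I) • (pdx C p ∘L Aζ)
  eqXx : ∀ p ∈ Ω, pdx X p = B p ∘L m2c σ2 ∘L C p
  eqXt : ∀ p ∈ Ω, pdt X p =
    Complex.I • (A ∘L B p ∘L m2c σ2 ∘L C p) -
      Complex.I • (B p ∘L m2c σ2 ∘L C p ∘L Aζ) +
      Complex.I • (B p ∘L m2c γ ∘L C p)
  eqLyap : ∀ p ∈ Ω, A ∘L X p + X p ∘L Aζ + B p ∘L m2c σ1 ∘L C p = 0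
  eqLink : ∀ p ∈ Ω, γs p =
    γ + σ2 * c2m (C p ∘L Xi p ∘L B p) * σ1 - σ1 * c2m (C p ∘L Xi p ∘L B p) * σ2

/-- The `n`-th moment `H_n = C 𝕏⁻¹ Aⁿ B` of a vessel, as a `d × d` matrix. -/
def Vessel.H {K : Type*} [NormedAddCommGroup K] [InnerProductSpace ℂ K]
    [CompleteSpace K] {d : ℕ} (V : Vessel K d) (n : ℕ) (p : ℝ × ℝ) :
    Matrix (Fin d) (Fin d) ℂ :=
  c2m (V.C p ∘L V.Xi p ∘L (V.A ^ n) ∘L V.B p)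

/-!
Write `a = λ - A` and `z = λ + Aζ`. The Lyapunov equation says exactly that
`B σ₁ C = a 𝕏 - 𝕏 z`, and sandwiching this between `𝕏⁻¹ a⁻¹` and `z⁻¹ 𝕏⁻¹` gives
`𝕏⁻¹ a⁻¹ (B σ₁ C) z⁻¹ 𝕏⁻¹ = z⁻¹ 𝕏⁻¹ - 𝕏⁻¹ a⁻¹`. Compressing by `C` and `B`, the matrices
`P = C 𝕏⁻¹ a⁻¹ B` and `Q = C z⁻¹ 𝕏⁻¹ B` satisfy `P σ₁ Q = Q - P`, which is precisely
`(1 - P σ₁) (1 + Q σ₁) = 1`. The reverse identity is automatic for square matrices.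
-/

theorem eq_smul_one_sub_mul_sub_mul_smul_one_add_of_add_eq_zero {𝕜 R : Type*} [CommSemiring 𝕜]
    [Ring R] [Algebra 𝕜 R] {a b x w : R} (c : 𝕜) (h : a * x + x * b + w = 0) :
    w = (c • 1 - a) * x - x * (c • 1 + b) := by
  rw [eq_neg_of_add_eq_zero_right h, sub_mul, mul_add, smul_one_mul, mul_smul_one]
  abel

theorem sandwich_mul_sub_mul_eq_sub {R : Type*} [Ring R] {a z x x' ra rz : R}
    (hx : x * x' = 1) (hx' : x' * x = 1) (ha : ra * a = 1) (hz : z * rz = 1) :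
    x' * ra * (a * x - x * z) * (rz * x') = rz * x' - x' * ra := by
  calc x' * ra * (a * x - x * z) * (rz * x')
      = x' * (ra * a) * x * rz * x' - x' * ra * x * (z * rz) * x' := by noncomm_ring
    _ = (x' * x) * rz * x' - x' * ra * (x * x') := by rw [ha, hz]; noncomm_ring
    _ = rz * x' - x' * ra := by rw [hx, hx', one_mul, mul_one]

theorem one_sub_mul_mul_one_add_mul_eq_one {R : Type*} [Ring R] {p q s : R}
    (h : p * s * q = q - p) : (1 - p * s) * (1 + q * s) = 1 := by
  calc (1 - p * s) * (1 + q * s) = 1 + (q - p - p * s * q) * s := by noncomm_ring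
    _ = 1 := by rw [h, sub_self, zero_mul, add_zero]

theorem c2m_m2c {d : ℕ} (σ : Matrix (Fin d) (Fin d) ℂ) : c2m (m2c σ) = σ :=
  StarAlgEquiv.symm_apply_apply _ _

theorem c2m_comp {d : ℕ} (P Q : Ed d →L[ℂ] Ed d) : c2m (P ∘L Q) = c2m P * c2m Q :=
  map_mul _ P Q

theorem c2m_sub {d : ℕ} (P Q : Ed d →L[ℂ] Ed d) : c2m (P - Q) = c2m P - c2m Q :=
  map_sub _ P Q

theorem c2m_comp_mul_m2c_mul_c2m_comp {K : Type*} [NormedAddCommGroup K] [NormedSpace ℂ K]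
    {d : ℕ} (C : K →L[ℂ] Ed d) (B : Ed d →L[ℂ] K) (M N : K →L[ℂ] K)
    (σ : Matrix (Fin d) (Fin d) ℂ) :
    c2m (C ∘L M ∘L B) * σ * c2m (C ∘L N ∘L B) =
      c2m (C ∘L (M * (B ∘L m2c σ ∘L C) * N) ∘L B) := by
  rw [← c2m_m2c σ, ← c2m_comp, ← c2m_comp, c2m_m2c]
  simp only [mul_def, comp_assoc]

theorem transfer_function_inverse_general {K : Type*} [NormedAddCommGroup K]
    [InnerProductSpace ℂ K] [CompleteSpace K] {d : ℕ}
    (A Aζ X Xi : K →L[ℂ] K)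
    (hX1 : X ∘L Xi = 1) (hX2 : Xi ∘L X = 1)
    (B : Ed d →L[ℂ] K) (C : K →L[ℂ] Ed d)
    (σ1 : Matrix (Fin d) (Fin d) ℂ)
    (hLyap : A ∘L X + X ∘L Aζ + B ∘L m2c σ1 ∘L C = 0)
    (lam : ℂ) (RA RZ : K →L[ℂ] K)
    (hRA2 : RA ∘L (lam • (1 : K →L[ℂ] K) - A) = 1)
    (hRZ1 : (lam • (1 : K →L[ℂ] K) + Aζ) ∘L RZ = 1) :
    (1 - c2m (C ∘L Xi ∘L RA ∘L B) * σ1) * (1 + c2m (C ∘L RZ ∘L Xi ∘L B) * σ1) = 1 ∧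
    (1 + c2m (C ∘L RZ ∘L Xi ∘L B) * σ1) * (1 - c2m (C ∘L Xi ∘L RA ∘L B) * σ1) = 1 := by
  have hBC : B ∘L m2c σ1 ∘L C = (lam • 1 - A) * X - X * (lam • 1 + Aζ) :=
    eq_smul_one_sub_mul_sub_mul_smul_one_add_of_add_eq_zero lam hLyap
  have hPQ : c2m (C ∘L Xi ∘L RA ∘L B) * σ1 * c2m (C ∘L RZ ∘L Xi ∘L B) =
      c2m (C ∘L RZ ∘L Xi ∘L B) - c2m (C ∘L Xi ∘L RA ∘L B) := by
    change c2m (C ∘L (Xi * RA) ∘L B) * σ1 * c2m (C ∘L (RZ * Xi) ∘L B) =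
      c2m (C ∘L (RZ * Xi) ∘L B) - c2m (C ∘L (Xi * RA) ∘L B)
    rw [c2m_comp_mul_m2c_mul_c2m_comp, hBC,
      sandwich_mul_sub_mul_eq_sub hX1 hX2 hRA2 hRZ1, sub_comp, comp_sub, c2m_sub]
  have hST := one_sub_mul_mul_one_add_mul_eq_one hPQ
  exact ⟨hST, mul_eq_one_comm.mp hST⟩

/-- the transfer function and its Schur-complement inverse are mutually
inverse, given the Lyapunov equation. -/
theorem transfer_function_inverse {K : Type*} [NormedAddCommGroup K]
    [InnerProductSpace ℂ K] [CompleteSpace K] {d : ℕ}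
    (A Aζ X Xi : K →L[ℂ] K)
    (hX1 : X ∘L Xi = 1) (hX2 : Xi ∘L X = 1)
    (B : Ed d →L[ℂ] K) (C : K →L[ℂ] Ed d)
    (σ1 : Matrix (Fin d) (Fin d) ℂ) (hσ1 : IsUnit σ1)
    (hLyap : A ∘L X + X ∘L Aζ + B ∘L m2c σ1 ∘L C = 0)
    (lam : ℂ) (RA RZ : K →L[ℂ] K)
    (hRA1 : (lam • (1 : K →L[ℂ] K) - A) ∘L RA = 1)
    (hRA2 : RA ∘L (lam • (1 : K →L[ℂ] K) - A) = 1)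
    (hRZ1 : (lam • (1 : K →L[ℂ] K) + Aζ) ∘L RZ = 1)
    (hRZ2 : RZ ∘L (lam • (1 : K →L[ℂ] K) + Aζ) = 1) :
    (1 - c2m (C ∘L Xi ∘L RA ∘L B) * σ1) * (1 + c2m (C ∘L RZ ∘L Xi ∘L B) * σ1) = 1 ∧
    (1 + c2m (C ∘L RZ ∘L Xi ∘L B) * σ1) * (1 - c2m (C ∘L Xi ∘L RA ∘L B) * σ1) = 1 :=
  transfer_function_inverse_general A Aζ X Xi hX1 hX2 B C σ1 hLyap lam RA RZ hRA2 hRZ1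
end
end

section
/- (External transformation of the second kind.) Let 𝔙 = (A_ζ, C, 𝕏, B, A; σ1, σ2, γ, γ_*; K, ℂ^d, Ω) be a regular vessel and let k2, k ∈ ℂ. Define the operator-valued functions V(x,t) = exp(−(A k2 + k)(x·I + i t A)) and U(x,t) = exp(−(A_ζ k2 − k)(x·I − i t A_ζ)) (exponentials of bounded operators on K; V(x,t) commutes with A and U(x,t) commutes with A_ζ), and set B̃(x,t) = V(x,t) B(x,t), C̃(x,t) = C(x,t) U(x,t), 𝕏̃(x,t) = V(x,t) 𝕏(x,t) U(x,t), σ̃2 = σ2 + k2 σ1, γ̃ = γ + k σ1, with γ̃_* given by the linkage condition for the new data. Then 𝔙̃ = (A_ζ, C̃, 𝕏̃, B̃, A; σ1, σ̃2, γ̃, γ̃_*; K, ℂ^d, Ω) is again a regular vessel, and the first moments coincide: H̃_0(x,t) = C̃(x,t) 𝕏̃(x,t)⁻¹ B̃(x,t) = C(x,t) 𝕏(x,t)⁻¹ B(x,t) = H_0(x,t) on Ω. -/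
noncomputable section

open ContinuousLinearMap

/-!
Write `V(x,t) = exp (x P + t Q)` with `P = -(k₂ A + k)`, `Q = i P A`, and
`U(x,t) = exp (x P' + t Q')` with `P' = -(k₂ A_ζ - k)`, `Q' = -i P' A_ζ`. Then `∂ₓ V = P V`,
`∂ₜ V = Q V`, `∂ₓ U = P' U`, `∂ₜ U = Q' U`, and `V` commutes with `A`, `U` with `A_ζ`. So each
vessel equation of the new data is the old one multiplied by `V` on the left and/or `U` on the
right: the terms coming from differentiating `V` and `U` are exactly absorbed by the shifts
`σ₂ ↦ σ₂ + k₂ σ₁`, `γ ↦ γ + k σ₁`, after eliminating `B σ₁ C` by the Lyapunov equation.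
Finally `𝕏̃⁻¹ = U⁻¹ 𝕏⁻¹ V⁻¹`, so the factors cancel in `C̃ 𝕏̃⁻¹ B̃ = C 𝕏⁻¹ B`.
-/

open NormedSpace ContinuousLinearMap

section ExpFlow

variable {𝔸 : Type*} [NormedRing 𝔸] [NormedAlgebra ℝ 𝔸]

def expFlow (P Q : 𝔸) (p : ℝ × ℝ) : 𝔸 := exp (p.1 • P + p.2 • Q)

variable {P Q R : 𝔸}

theorem expFlow_commute (hP : Commute P R) (hQ : Commute Q R) (p : ℝ × ℝ) :
    Commute (expFlow P Q p) R :=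
  ((hP.smul_left _).add_left (hQ.smul_left _)).exp_left

variable [CompleteSpace 𝔸]

theorem expFlow_mul_expFlow_neg (p : ℝ × ℝ) : expFlow P Q p * expFlow (-P) (-Q) p = 1 := by
  -- `exp_add_of_commute` is stated for Banach `ℚ`-algebras
  let : NormedAlgebra ℚ 𝔸 := .restrictScalars ℚ ℝ 𝔸
  rw [expFlow, expFlow, smul_neg, smul_neg, ← neg_add,
    ← exp_add_of_commute (Commute.refl _).neg_right, add_neg_cancel, exp_zero]

theorem expFlow_neg_mul_expFlow (p : ℝ × ℝ) : expFlow (-P) (-Q) p * expFlow P Q p = 1 := by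
  simpa using expFlow_mul_expFlow_neg (P := -P) (Q := -Q) p

theorem contDiff_expFlow (P Q : 𝔸) {n : WithTop ℕ∞} : ContDiff ℝ n (expFlow P Q) :=
  (contDiff_iff_contDiffAt.2 fun x => (exp_analytic (𝕂 := ℝ) x).contDiffAt).comp
    ((contDiff_fst.smul contDiff_const).add (contDiff_snd.smul contDiff_const))

theorem pdx_expFlow (hPQ : Commute P Q) (p : ℝ × ℝ) :
    pdx (expFlow P Q) p = P * expFlow P Q p := by
  let : NormedAlgebra ℚ 𝔸 := .restrictScalars ℚ ℝ 𝔸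
  have hsplit (x : ℝ) : expFlow P Q (x, p.2) = exp (x • P) * exp (p.2 • Q) :=
    exp_add_of_commute ((hPQ.smul_left _).smul_right _)
  simp only [pdx, hsplit, ← mul_assoc]
  exact ((hasDerivAt_exp_smul_const' P p.1).mul_const _).deriv

theorem pdt_expFlow (hPQ : Commute P Q) (p : ℝ × ℝ) :
    pdt (expFlow P Q) p = Q * expFlow P Q p := by
  have hswap (q : ℝ × ℝ) : expFlow P Q q.swap = expFlow Q P q := by
    rw [expFlow, expFlow, add_comm]; rfl
  -- the `t`-slice of `expFlow P Q` through `p` is the `x`-slice of `expFlow Q P` through `p.swap`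
  have h := pdx_expFlow hPQ.symm p.swap
  simp only [pdx, ← hswap] at h
  exact h

end ExpFlow

section CompCLM

variable {M E F G : Type*} [NormedAddCommGroup M] [NormedSpace ℝ M]
  [NormedAddCommGroup E] [NormedSpace ℂ E] [NormedAddCommGroup F] [NormedSpace ℂ F]
  [NormedAddCommGroup G] [NormedSpace ℂ G]

theorem ContDiffOn.clm_comp_complex {n : WithTop ℕ∞} {s : Set M} {f : M → F →L[ℂ] G}
    {g : M → E →L[ℂ] F} (hf : ContDiffOn ℝ n f s) (hg : ContDiffOn ℝ n g s) :
    ContDiffOn ℝ n (fun x => f x ∘L g x) s :=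
  ((compL ℂ E F G).bilinearRestrictScalars ℝ).isBoundedBilinearMap.contDiff.comp_contDiffOn
    (hf.prodMk hg)

theorem DifferentiableAt.clm_comp_complex {f : M → F →L[ℂ] G} {g : M → E →L[ℂ] F} {x : M}
    (hf : DifferentiableAt ℝ f x) (hg : DifferentiableAt ℝ g x) :
    DifferentiableAt ℝ (fun y => f y ∘L g y) x :=
  ((compL ℂ E F G).bilinearRestrictScalars ℝ).isBoundedBilinearMap.differentiableAt _ |>.comp x
    (hf.prodMk hg)

theorem deriv_clm_comp_complex {f : ℝ → F →L[ℂ] G} {g : ℝ → E →L[ℂ] F} {x : ℝ}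
    (hf : DifferentiableAt ℝ f x) (hg : DifferentiableAt ℝ g x) :
    deriv (fun y => f y ∘L g y) x = deriv f x ∘L g x + f x ∘L deriv g x := by
  rw [add_comm]
  exact ((compL ℂ E F G).bilinearRestrictScalars ℝ).deriv_of_bilinear (fun _ => hf) fun _ => hg

variable {f : ℝ × ℝ → F →L[ℂ] G} {g : ℝ × ℝ → E →L[ℂ] F} {p : ℝ × ℝ}

theorem pdx_clm_comp (hf : DifferentiableAt ℝ f p) (hg : DifferentiableAt ℝ g p) :
    pdx (fun q => f q ∘L g q) p = pdx f p ∘L g p + f p ∘L pdx g p :=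
  have hslice : HasFDerivAt (fun x : ℝ => (x, p.2)) _ p.1 :=
    (hasFDerivAt_id p.1).prodMk (hasFDerivAt_const p.2 p.1)
  deriv_clm_comp_complex (hf.comp p.1 hslice.differentiableAt)
    (hg.comp p.1 hslice.differentiableAt)

theorem pdt_clm_comp (hf : DifferentiableAt ℝ f p) (hg : DifferentiableAt ℝ g p) :
    pdt (fun q => f q ∘L g q) p = pdt f p ∘L g p + f p ∘L pdt g p :=
  have hslice : HasFDerivAt (fun t : ℝ => (p.1, t)) _ p.2 :=
    (hasFDerivAt_const p.1 p.2).prodMk (hasFDerivAt_id p.2)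
  deriv_clm_comp_complex (hf.comp p.2 hslice.differentiableAt)
    (hg.comp p.2 hslice.differentiableAt)

end CompCLM

section Algebra

theorem mul_mul_mul_mul_mul_eq_one {M : Type*} [Monoid M] {a a' b b' c c' : M}
    (ha : a * a' = 1) (hb : b * b' = 1) (hc : c * c' = 1) :
    a * (b * c) * (c' * (b' * a')) = 1 := by
  simp only [mul_assoc]
  rw [← mul_assoc c, hc, one_mul, ← mul_assoc b, hb, one_mul, ha]

variable {E K : Type*} [NormedAddCommGroup E] [NormedSpace ℂ E]
  [NormedAddCommGroup K] [NormedSpace ℂ K]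

theorem Commute.clm_comp_comp {R S : K →L[ℂ] K} (h : Commute R S) (T : E →L[ℂ] K) :
    R ∘L S ∘L T = S ∘L R ∘L T := by
  rw [← comp_assoc, ← comp_assoc, ← mul_def, ← mul_def, h.eq]

theorem comp_comp_comp_cancel {C : K →L[ℂ] E} {Y U U' W W' : K →L[ℂ] K} {B : E →L[ℂ] K}
    (hU : U ∘L U' = 1) (hW : W' ∘L W = 1) :
    (C ∘L U) ∘L (U' ∘L Y ∘L W') ∘L (W ∘L B) = C ∘L Y ∘L B := by
  simp only [comp_assoc]
  rw [← comp_assoc W' W, hW, ← comp_assoc U U', hU, one_def, id_comp, id_comp]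

variable (k2 k : ℂ) {A Aζ W U X Xx Xt : K →L[ℂ] K} {B Bx Bt : E →L[ℂ] K}
  {C Cx Ct : K →L[ℂ] E} {s1 s2 g : E →L[ℂ] E}

theorem secondKind_eqBx (hW : Commute A W) (h : Bx ∘L s1 + A ∘L B ∘L s2 + B ∘L g = 0) :
    ((-(k2 • A + k • 1) * W) ∘L B + W ∘L Bx) ∘L s1 + A ∘L (W ∘L B) ∘L (s2 + k2 • s1) +
      (W ∘L B) ∘L (g + k • s1) = 0 := by
  have key : ((-(k2 • A + k • 1) * W) ∘L B + W ∘L Bx) ∘L s1 +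
      A ∘L (W ∘L B) ∘L (s2 + k2 • s1) + (W ∘L B) ∘L (g + k • s1) =
      W ∘L (Bx ∘L s1 + A ∘L B ∘L s2 + B ∘L g) := by
    simp only [mul_def, comp_assoc, comp_add, add_comp, comp_smul, smul_comp, neg_comp,
      one_def, id_comp, hW.clm_comp_comp]
    module
  rw [key, h, comp_zero]

theorem secondKind_eqBt (hW : Commute A W) (h : Bt = Complex.I • (A ∘L Bx)) :
    (Complex.I • (-(k2 • A + k • 1) * A) * W) ∘L B + W ∘L Bt =
      Complex.I • (A ∘L ((-(k2 • A + k • 1) * W) ∘L B + W ∘L Bx)) := by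
  simp only [h, mul_def, comp_assoc, comp_add, add_comp, comp_smul, smul_comp, neg_comp,
    comp_neg, one_def, id_comp, hW.clm_comp_comp]
  module

theorem secondKind_eqCx (hU : Commute U Aζ) (h : s1 ∘L Cx + s2 ∘L C ∘L Aζ - g ∘L C = 0) :
    s1 ∘L (Cx ∘L U + C ∘L (-(k2 • Aζ - k • 1) * U)) + (s2 + k2 • s1) ∘L (C ∘L U) ∘L Aζ -
      (g + k • s1) ∘L (C ∘L U) = 0 := by
  have hU' : U ∘L Aζ = Aζ ∘L U := hU.eq
  have key : s1 ∘L (Cx ∘L U + C ∘L (-(k2 • Aζ - k • 1) * U)) +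
      (s2 + k2 • s1) ∘L (C ∘L U) ∘L Aζ - (g + k • s1) ∘L (C ∘L U) =
      (s1 ∘L Cx + s2 ∘L C ∘L Aζ - g ∘L C) ∘L U := by
    simp only [mul_def, comp_assoc, comp_add, add_comp, comp_sub, sub_comp, comp_smul,
      smul_comp, neg_comp, comp_neg, one_def, id_comp, hU']
    module
  rw [key, h, zero_comp]

theorem secondKind_eqCt (hU : Commute U Aζ) (h : Ct = (-Complex.I) • (Cx ∘L Aζ)) :
    Ct ∘L U + C ∘L ((-Complex.I) • (-(k2 • Aζ - k • 1) * Aζ) * U) =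
      (-Complex.I) • ((Cx ∘L U + C ∘L (-(k2 • Aζ - k • 1) * U)) ∘L Aζ) := by
  have hU' : U ∘L Aζ = Aζ ∘L U := hU.eq
  simp only [h, mul_def, comp_assoc, add_comp, comp_sub, sub_comp, comp_smul, smul_comp,
    neg_comp, comp_neg, one_def, id_comp, hU']
  module

theorem secondKind_eqLyap (hW : Commute A W) (hU : Commute U Aζ)
    (h : A ∘L X + X ∘L Aζ + B ∘L s1 ∘L C = 0) :
    A ∘L (W ∘L X ∘L U) + (W ∘L X ∘L U) ∘L Aζ + (W ∘L B) ∘L s1 ∘L (C ∘L U) = 0 := by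
  have hU' : U ∘L Aζ = Aζ ∘L U := hU.eq
  have key : A ∘L (W ∘L X ∘L U) + (W ∘L X ∘L U) ∘L Aζ + (W ∘L B) ∘L s1 ∘L (C ∘L U) =
      W ∘L (A ∘L X + X ∘L Aζ + B ∘L s1 ∘L C) ∘L U := by
    simp only [comp_assoc, comp_add, add_comp, hU', hW.clm_comp_comp]
  rw [key, h, zero_comp, comp_zero]

theorem comp_comp_comp_eq_of_lyapunov (h : A ∘L X + X ∘L Aζ + B ∘L s1 ∘L C = 0)
    (T : K →L[ℂ] K) : B ∘L s1 ∘L C ∘L T = -(A ∘L X ∘L T) - X ∘L Aζ ∘L T := by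
  have hT := congrArg (· ∘L T) h
  simp only [add_comp, comp_assoc, zero_comp] at hT
  linear_combination (norm := module) hT

theorem secondKind_eqXx (hW : Commute A W) (hL : A ∘L X + X ∘L Aζ + B ∘L s1 ∘L C = 0)
    (h : Xx = B ∘L s2 ∘L C) :
    (-(k2 • A + k • 1) * W) ∘L (X ∘L U) + W ∘L (Xx ∘L U + X ∘L (-(k2 • Aζ - k • 1) * U)) =
      (W ∘L B) ∘L (s2 + k2 • s1) ∘L (C ∘L U) := by
  simp only [h, mul_def, comp_assoc, comp_add, add_comp, comp_sub, sub_comp, comp_smul,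
    smul_comp, neg_comp, comp_neg, one_def, id_comp, hW.clm_comp_comp,
    comp_comp_comp_eq_of_lyapunov hL]
  module

theorem secondKind_eqXt (hW : Commute A W) (hU : Commute U Aζ)
    (hL : A ∘L X + X ∘L Aζ + B ∘L s1 ∘L C = 0)
    (h : Xt = Complex.I • (A ∘L B ∘L s2 ∘L C) - Complex.I • (B ∘L s2 ∘L C ∘L Aζ) +
      Complex.I • (B ∘L g ∘L C)) :
    (Complex.I • (-(k2 • A + k • 1) * A) * W) ∘L (X ∘L U) +
        W ∘L (Xt ∘L U + X ∘L ((-Complex.I) • (-(k2 • Aζ - k • 1) * Aζ) * U)) =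
      Complex.I • (A ∘L (W ∘L B) ∘L (s2 + k2 • s1) ∘L (C ∘L U)) -
        Complex.I • ((W ∘L B) ∘L (s2 + k2 • s1) ∘L (C ∘L U) ∘L Aζ) +
        Complex.I • ((W ∘L B) ∘L (g + k • s1) ∘L (C ∘L U)) := by
  have hU' : U ∘L Aζ = Aζ ∘L U := hU.eq
  simp only [h, mul_def, comp_assoc, comp_add, add_comp, comp_sub, sub_comp, comp_smul,
    smul_comp, neg_comp, comp_neg, one_def, id_comp, hU', hW.clm_comp_comp,
    comp_comp_comp_eq_of_lyapunov hL]
  module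

end Algebra

theorem m2c_add {d : ℕ} (σ τ : Matrix (Fin d) (Fin d) ℂ) : m2c (σ + τ) = m2c σ + m2c τ :=
  map_add _ σ τ

theorem m2c_smul {d : ℕ} (c : ℂ) (σ : Matrix (Fin d) (Fin d) ℂ) : m2c (c • σ) = c • m2c σ :=
  map_smul (Matrix.toEuclideanCLM (𝕜 := ℂ)) c σ

namespace Vessel

variable {K : Type*} [NormedAddCommGroup K] [InnerProductSpace ℂ K] [CompleteSpace K] {d : ℕ}
  (V : Vessel K d) (k2 k : ℂ)

theorem differentiableAt_B {p : ℝ × ℝ} (hp : p ∈ V.Ω) : DifferentiableAt ℝ V.B p :=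
  (V.smoothB.differentiableOn (by norm_num)).differentiableAt (V.hΩ.mem_nhds hp)

theorem differentiableAt_C {p : ℝ × ℝ} (hp : p ∈ V.Ω) : DifferentiableAt ℝ V.C p :=
  (V.smoothC.differentiableOn (by norm_num)).differentiableAt (V.hΩ.mem_nhds hp)

theorem differentiableAt_X {p : ℝ × ℝ} (hp : p ∈ V.Ω) : DifferentiableAt ℝ V.X p :=
  (V.smoothX.differentiableOn (by norm_num)).differentiableAt (V.hΩ.mem_nhds hp)

def genV : K →L[ℂ] K := -(k2 • V.A + k • 1)

def genU : K →L[ℂ] K := -(k2 • V.Aζ - k • 1)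

def opV : ℝ × ℝ → K →L[ℂ] K := expFlow (V.genV k2 k) (Complex.I • (V.genV k2 k * V.A))

def opU : ℝ × ℝ → K →L[ℂ] K := expFlow (V.genU k2 k) ((-Complex.I) • (V.genU k2 k * V.Aζ))

def opVInv : ℝ × ℝ → K →L[ℂ] K := expFlow (-V.genV k2 k) (-(Complex.I • (V.genV k2 k * V.A)))

def opUInv : ℝ × ℝ → K →L[ℂ] K :=
  expFlow (-V.genU k2 k) (-((-Complex.I) • (V.genU k2 k * V.Aζ)))

theorem opV_mul_opVInv (p : ℝ × ℝ) : V.opV k2 k p * V.opVInv k2 k p = 1 :=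
  expFlow_mul_expFlow_neg p

theorem opVInv_mul_opV (p : ℝ × ℝ) : V.opVInv k2 k p * V.opV k2 k p = 1 :=
  expFlow_neg_mul_expFlow p

theorem opU_mul_opUInv (p : ℝ × ℝ) : V.opU k2 k p * V.opUInv k2 k p = 1 :=
  expFlow_mul_expFlow_neg p

theorem opUInv_mul_opU (p : ℝ × ℝ) : V.opUInv k2 k p * V.opU k2 k p = 1 :=
  expFlow_neg_mul_expFlow p

theorem commute_A_genV : Commute V.A (V.genV k2 k) :=
  (((Commute.refl V.A).smul_right k2).add_right ((Commute.one_right V.A).smul_right k)).neg_right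

theorem commute_Aζ_genU : Commute V.Aζ (V.genU k2 k) :=
  (((Commute.refl V.Aζ).smul_right k2).sub_right ((Commute.one_right V.Aζ).smul_right k)).neg_right

theorem commute_A_opV (p : ℝ × ℝ) : Commute V.A (V.opV k2 k p) :=
  (expFlow_commute (V.commute_A_genV k2 k).symm
    (((V.commute_A_genV k2 k).symm.mul_left (Commute.refl _)).smul_left _) p).symm

theorem commute_opU_Aζ (p : ℝ × ℝ) : Commute (V.opU k2 k p) V.Aζ :=
  expFlow_commute (V.commute_Aζ_genU k2 k).symm
    (((V.commute_Aζ_genU k2 k).symm.mul_left (Commute.refl _)).smul_left _) p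

theorem pdx_opV (p : ℝ × ℝ) : pdx (V.opV k2 k) p = V.genV k2 k * V.opV k2 k p :=
  pdx_expFlow (((Commute.refl _).mul_right (V.commute_A_genV k2 k).symm).smul_right _) p

theorem pdt_opV (p : ℝ × ℝ) :
    pdt (V.opV k2 k) p = Complex.I • (V.genV k2 k * V.A) * V.opV k2 k p :=
  pdt_expFlow (((Commute.refl _).mul_right (V.commute_A_genV k2 k).symm).smul_right _) p

theorem pdx_opU (p : ℝ × ℝ) : pdx (V.opU k2 k) p = V.genU k2 k * V.opU k2 k p :=
  pdx_expFlow (((Commute.refl _).mul_right (V.commute_Aζ_genU k2 k).symm).smul_right _) p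

theorem pdt_opU (p : ℝ × ℝ) :
    pdt (V.opU k2 k) p = (-Complex.I) • (V.genU k2 k * V.Aζ) * V.opU k2 k p :=
  pdt_expFlow (((Commute.refl _).mul_right (V.commute_Aζ_genU k2 k).symm).smul_right _) p

theorem opV_eq (p : ℝ × ℝ) : V.opV k2 k p = exp
    (-((k2 • V.A + k • (1 : K →L[ℂ] K)) *
      ((p.1 : ℂ) • (1 : K →L[ℂ] K) + (Complex.I * (p.2 : ℂ)) • V.A))) := by
  rw [opV, expFlow, genV]
  congr 1
  simp only [mul_add, mul_smul_comm, mul_one, ← Complex.coe_smul, smul_smul, neg_mul]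
  module

theorem opU_eq (p : ℝ × ℝ) : V.opU k2 k p = exp
    (-((k2 • V.Aζ - k • (1 : K →L[ℂ] K)) *
      ((p.1 : ℂ) • (1 : K →L[ℂ] K) - (Complex.I * (p.2 : ℂ)) • V.Aζ))) := by
  rw [opU, expFlow, genU]
  congr 1
  simp only [mul_sub, mul_smul_comm, mul_one, ← Complex.coe_smul, smul_smul, neg_mul]
  module

theorem differentiableAt_opV (p : ℝ × ℝ) : DifferentiableAt ℝ (V.opV k2 k) p :=
  (contDiff_expFlow _ _ (n := 1)).differentiable one_ne_zero p

theorem differentiableAt_opU (p : ℝ × ℝ) : DifferentiableAt ℝ (V.opU k2 k) p :=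
  (contDiff_expFlow _ _ (n := 1)).differentiable one_ne_zero p

def secondKind : Vessel K d where
  Ω := V.Ω
  hΩ := V.hΩ
  A := V.A
  Aζ := V.Aζ
  B p := V.opV k2 k p ∘L V.B p
  C p := V.C p ∘L V.opU k2 k p
  X p := V.opV k2 k p ∘L V.X p ∘L V.opU k2 k p
  Xi p := V.opUInv k2 k p ∘L V.Xi p ∘L V.opVInv k2 k p
  σ1 := V.σ1
  σ2 := V.σ2 + k2 • V.σ1
  γ := V.γ + k • V.σ1
  -- the linkage condition of the new data, written with `V.H 0` since `H₀` is unchanged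
  γs p := V.γ + k • V.σ1 + (V.σ2 + k2 • V.σ1) * V.H 0 p * V.σ1 -
    V.σ1 * V.H 0 p * (V.σ2 + k2 • V.σ1)
  hσ1 := V.hσ1
  smoothB := (contDiff_expFlow _ _).contDiffOn.clm_comp_complex V.smoothB
  smoothC := V.smoothC.clm_comp_complex (contDiff_expFlow _ _).contDiffOn
  smoothX := (contDiff_expFlow _ _).contDiffOn.clm_comp_complex
    (V.smoothX.clm_comp_complex (contDiff_expFlow _ _).contDiffOn)
  hXinv p hp :=
    ⟨mul_mul_mul_mul_mul_eq_one (V.opV_mul_opVInv k2 k p) (V.hXinv p hp).1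
      (V.opU_mul_opUInv k2 k p),
    mul_mul_mul_mul_mul_eq_one (V.opUInv_mul_opU k2 k p) (V.hXinv p hp).2
      (V.opVInv_mul_opV k2 k p)⟩
  eqBx p hp := by
    rw [pdx_clm_comp (V.differentiableAt_opV k2 k p) (V.differentiableAt_B hp), pdx_opV,
      m2c_add, m2c_add, m2c_smul, m2c_smul]
    exact secondKind_eqBx k2 k (V.commute_A_opV k2 k p) (V.eqBx p hp)
  eqBt p hp := by
    rw [pdt_clm_comp (V.differentiableAt_opV k2 k p) (V.differentiableAt_B hp),
      pdx_clm_comp (V.differentiableAt_opV k2 k p) (V.differentiableAt_B hp), pdt_opV, pdx_opV]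
    exact secondKind_eqBt k2 k (V.commute_A_opV k2 k p) (V.eqBt p hp)
  eqCx p hp := by
    rw [pdx_clm_comp (V.differentiableAt_C hp) (V.differentiableAt_opU k2 k p), pdx_opU,
      m2c_add, m2c_add, m2c_smul, m2c_smul]
    exact secondKind_eqCx k2 k (V.commute_opU_Aζ k2 k p) (V.eqCx p hp)
  eqCt p hp := by
    rw [pdt_clm_comp (V.differentiableAt_C hp) (V.differentiableAt_opU k2 k p),
      pdx_clm_comp (V.differentiableAt_C hp) (V.differentiableAt_opU k2 k p), pdt_opU, pdx_opU]
    exact secondKind_eqCt k2 k (V.commute_opU_Aζ k2 k p) (V.eqCt p hp)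
  eqXx p hp := by
    have hXU := (V.differentiableAt_X hp).clm_comp_complex (V.differentiableAt_opU k2 k p)
    rw [pdx_clm_comp (V.differentiableAt_opV k2 k p) hXU,
      pdx_clm_comp (V.differentiableAt_X hp) (V.differentiableAt_opU k2 k p), pdx_opV, pdx_opU,
      m2c_add, m2c_smul]
    exact secondKind_eqXx k2 k (V.commute_A_opV k2 k p) (V.eqLyap p hp) (V.eqXx p hp)
  eqXt p hp := by
    have hXU := (V.differentiableAt_X hp).clm_comp_complex (V.differentiableAt_opU k2 k p)
    rw [pdt_clm_comp (V.differentiableAt_opV k2 k p) hXU,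
      pdt_clm_comp (V.differentiableAt_X hp) (V.differentiableAt_opU k2 k p), pdt_opV, pdt_opU,
      m2c_add, m2c_add, m2c_smul, m2c_smul]
    exact secondKind_eqXt k2 k (V.commute_A_opV k2 k p) (V.commute_opU_Aζ k2 k p)
      (V.eqLyap p hp) (V.eqXt p hp)
  eqLyap p hp :=
    secondKind_eqLyap (V.commute_A_opV k2 k p) (V.commute_opU_Aζ k2 k p) (V.eqLyap p hp)
  eqLink p _ := by
    rw [comp_comp_comp_cancel (V.opU_mul_opUInv k2 k p) (V.opVInv_mul_opV k2 k p)]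
    simp only [H, pow_zero, one_def, id_comp]

theorem secondKind_H_zero (p : ℝ × ℝ) : (V.secondKind k2 k).H 0 p = V.H 0 p := by
  simp only [H, pow_zero, one_def, id_comp]
  exact congrArg c2m (comp_comp_comp_cancel (V.opU_mul_opUInv k2 k p) (V.opVInv_mul_opV k2 k p))

end Vessel

/-- the external transformation of the second kind produces again a
regular vessel, with the same first moment. -/
theorem external_transformation_second_kind {K : Type*} [NormedAddCommGroup K]
    [InnerProductSpace ℂ K] [CompleteSpace K] {d : ℕ}
    (V₁ : Vessel K d) (k2 k : ℂ)
    (Vop Uop : ℝ × ℝ → K →L[ℂ] K)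
    (hVop : ∀ p : ℝ × ℝ, Vop p = NormedSpace.exp
      (-((k2 • V₁.A + k • (1 : K →L[ℂ] K)) *
          ((p.1 : ℂ) • (1 : K →L[ℂ] K) + (Complex.I * (p.2 : ℂ)) • V₁.A))))
    (hUop : ∀ p : ℝ × ℝ, Uop p = NormedSpace.exp
      (-((k2 • V₁.Aζ - k • (1 : K →L[ℂ] K)) *
          ((p.1 : ℂ) • (1 : K →L[ℂ] K) - (Complex.I * (p.2 : ℂ)) • V₁.Aζ)))) :
    ∃ V₂ : Vessel K d,
      V₂.Ω = V₁.Ω ∧ V₂.A = V₁.A ∧ V₂.Aζ = V₁.Aζ ∧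
      V₂.B = (fun p => Vop p ∘L V₁.B p) ∧
      V₂.C = (fun p => V₁.C p ∘L Uop p) ∧
      V₂.X = (fun p => Vop p ∘L V₁.X p ∘L Uop p) ∧
      V₂.σ1 = V₁.σ1 ∧ V₂.σ2 = V₁.σ2 + k2 • V₁.σ1 ∧ V₂.γ = V₁.γ + k • V₁.σ1 ∧
      ∀ p ∈ V₁.Ω, V₂.H 0 p = V₁.H 0 p := by
  obtain rfl : Vop = V₁.opV k2 k := funext fun p => (hVop p).trans (V₁.opV_eq k2 k p).symm
  obtain rfl : Uop = V₁.opU k2 k := funext fun p => (hUop p).trans (V₁.opU_eq k2 k p).symm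
  exact ⟨V₁.secondKind k2 k, rfl, rfl, rfl, rfl, rfl, rfl, rfl, rfl, rfl,
    fun p _ => V₁.secondKind_H_zero k2 k p⟩
end
end

section
/- (Generalized KdV equation.) Let 𝔙 be a regular vessel with d = 2 and generalized KdV parameters σ1 = I, σ2 = [[0,0],[1,0]], γ = [[γ11, γ12],[γ21, −γ11]] with γ12 ≠ 0, write H_0(x,t) = [[h11, h12],[h21, h22]], and assume the normalization h11 + h22 = 0 on Ω. Then on Ω the entry h12 satisfies the generalized KdV equation 4i·γ12·∂_t h12 = 4(γ11² + γ12·γ21)·∂_x h12 − 6(∂_x h12)² − ∂_{xxx} h12. -/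
noncomputable section

open ContinuousLinearMap

/-!
Write `Hₙ = C 𝕏⁻¹ Aⁿ B`. The vessel equations, together with the Lyapunov equation in the form
`A_ζ 𝕏⁻¹ = -𝕏⁻¹ A - 𝕏⁻¹ B C 𝕏⁻¹` (for `σ₁ = I`), close up into the moment recursions
`∂ₓ Hₙ = [σ₂, Hₙ₊₁] + [γ, Hₙ] + [σ₂, H₀] Hₙ` and `∂ₜ Hₙ = i (∂ₓ Hₙ₊₁ + (∂ₓ H₀) Hₙ)`.
For the KdV parameters and `tr H₀ = 0`, the entries `h₁₁, h₁₂, h₂₁` of `H₀` and the `(1,2)` entry of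
`H₁` then satisfy a closed first-order system in `x` (up to the entry `(H₁)₁₁ - (H₁)₂₂`, which
cancels). Differentiating `∂ₓ h₁₂ = 2γ₁₁ h₁₂ - 2γ₁₂ h₁₁ - h₁₂²` twice along this system and
comparing with the `(1,2)` entry of the time recursion for `H₀` gives the equation.
-/

open Filter Topology

section Calculus

variable {E F G : Type*} [NormedAddCommGroup E] [NormedSpace ℂ E]
  [NormedAddCommGroup F] [NormedSpace ℂ F] [NormedAddCommGroup G] [NormedSpace ℂ G]

theorem isBoundedBilinearMap_comp_real :
    IsBoundedBilinearMap ℝ fun p : (F →L[ℂ] G) × (E →L[ℂ] F) => p.1.comp p.2 where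
  add_left _ _ _ := add_comp _ _ _
  smul_left _ _ _ := smul_comp _ _ _
  add_right _ _ _ := comp_add _ _ _
  smul_right _ _ _ := comp_smul _ _ _
  bound := ⟨1, one_pos, fun f g => by simpa using f.opNorm_comp_le g⟩

theorem HasDerivAt.clm_comp_real {c : ℝ → F →L[ℂ] G} {c' : F →L[ℂ] G}
    {d : ℝ → E →L[ℂ] F} {d' : E →L[ℂ] F} {x : ℝ}
    (hc : HasDerivAt c c' x) (hd : HasDerivAt d d' x) :
    HasDerivAt (fun y => (c y).comp (d y)) (c'.comp (d x) + (c x).comp d') x := by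
  simpa [IsBoundedBilinearMap.deriv_apply, add_comm, Function.comp_def] using
    (isBoundedBilinearMap_comp_real.hasFDerivAt (c x, d x)).comp_hasDerivAt x (hc.prodMk hd)

theorem HasDerivAt.of_eventually_inverse {R : Type*} [NormedRing R] [NormedAlgebra ℝ R]
    [CompleteSpace R] {X Y : ℝ → R} {X' : R} {x : ℝ} (hX : HasDerivAt X X' x)
    (hXY : ∀ᶠ y in 𝓝 x, X y * Y y = 1 ∧ Y y * X y = 1) :
    HasDerivAt Y (-(Y x * X' * Y x)) x := by
  have hY : Y =ᶠ[𝓝 x] fun y => Ring.inverse (X y) := hXY.mono fun y hy =>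
    (Ring.inverse_unit ⟨X y, Y y, hy.1, hy.2⟩).symm
  let u : Rˣ := ⟨X x, Y x, hXY.self_of_nhds.1, hXY.self_of_nhds.2⟩
  have hinv := HasFDerivAt.comp_hasDerivAt (f := X) x (hasFDerivAt_ringInverse (𝕜 := ℝ) u) hX
  simpa [Function.comp_def, u] using hinv.congr_of_eventuallyEq hY

theorem hasDerivAt_deriv_of_forall {M : Type*} [NormedAddCommGroup M] [NormedSpace ℝ M]
    {U : Set ℝ} (hU : IsOpen U) {f g : ℝ → M} (hf : ∀ y ∈ U, HasDerivAt f (g y) y)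
    {x : ℝ} (hx : x ∈ U) {g' : M} (hg : HasDerivAt g g' x) : HasDerivAt (deriv f) g' x :=
  hg.congr_of_eventuallyEq <| eventually_of_mem (hU.mem_nhds hx) fun y hy => (hf y hy).deriv

end Calculus

section Partial

variable {M : Type*} [NormedAddCommGroup M] [NormedSpace ℝ M] {Φ : ℝ × ℝ → M} {q : ℝ × ℝ}

theorem DifferentiableAt.hasDerivAt_pdx (h : DifferentiableAt ℝ Φ q) :
    HasDerivAt (fun x => Φ (x, q.2)) (pdx Φ q) q.1 :=
  (h.comp q.1 (f := fun x => (x, q.2)) (by fun_prop)).hasDerivAt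

theorem DifferentiableAt.hasDerivAt_pdt (h : DifferentiableAt ℝ Φ q) :
    HasDerivAt (fun t => Φ (q.1, t)) (pdt Φ q) q.2 :=
  (h.comp q.2 (f := fun t => (q.1, t)) (by fun_prop)).hasDerivAt

end Partial

/-- In the application `a, b, c` are the entries `h₁₁, h₁₂, h₂₁` of `H₀`, `q` is the `(1,2)` entry
of `H₁` and `r = (H₁)₁₁ - (H₁)₂₂`. -/
theorem deriv_deriv_deriv_eq_of_moment_system {U : Set ℝ} (hU : IsOpen U) {x : ℝ} (hx : x ∈ U)
    {γ11 γ12 γ21 : ℂ} {a b c q r : ℝ → ℂ}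
    (ha : ∀ y ∈ U, HasDerivAt a (-q y + γ12 * c y - γ21 * b y - b y * a y) y)
    (hb : ∀ y ∈ U, HasDerivAt b (2 * γ11 * b y - 2 * γ12 * a y - b y * b y) y)
    (hc : ∀ y ∈ U, HasDerivAt c
      (r y + 2 * γ21 * a y - 2 * γ11 * c y + 2 * a y * a y + b y * c y) y)
    (hq : ∀ y ∈ U, HasDerivAt q (2 * γ11 * q y - γ12 * r y - b y * q y) y) :
    deriv (deriv (deriv b)) x = 4 * (γ11 ^ 2 + γ12 * γ21) * deriv b x - 6 * deriv b x ^ 2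
      + 4 * γ12 * (deriv q x + deriv a x * b x - a x * deriv b x) := by
  have hb2 : ∀ y ∈ U, HasDerivAt (deriv b)
      (2 * γ11 * deriv b y - 2 * γ12 * deriv a y - 2 * b y * deriv b y) y := fun y hy =>
    hasDerivAt_deriv_of_forall hU hb hy <|
      ((((hb y hy).const_mul _).sub ((ha y hy).const_mul _)).sub
        ((hb y hy).mul (hb y hy))).congr_deriv (by rw [(ha y hy).deriv, (hb y hy).deriv]; ring)
  have ha2 : ∀ y ∈ U, HasDerivAt (deriv a)
      (-deriv q y + γ12 * deriv c y - γ21 * deriv b y - (deriv b y * a y + b y * deriv a y)) y :=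
    fun y hy => hasDerivAt_deriv_of_forall hU ha hy <|
      ((((hq y hy).neg.add ((hc y hy).const_mul _)).sub ((hb y hy).const_mul _)).sub
        ((hb y hy).mul (ha y hy))).congr_deriv
        (by rw [(ha y hy).deriv, (hb y hy).deriv, (hc y hy).deriv, (hq y hy).deriv])
  have hb3 : HasDerivAt (deriv (deriv b)) (2 * γ11 * deriv (deriv b) x
      - 2 * γ12 * deriv (deriv a) x - 2 * (deriv b x * deriv b x + b x * deriv (deriv b) x)) x :=
    hasDerivAt_deriv_of_forall hU hb2 hx <|
      (((((hb2 x hx).const_mul (2 * γ11)).sub ((ha2 x hx).const_mul (2 * γ12))).sub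
        (((hb x hx).const_mul 2).mul (hb2 x hx))).congr_deriv
        (by rw [(hb2 x hx).deriv, (ha2 x hx).deriv, (hb x hx).deriv]; ring))
  rw [hb3.deriv, (hb2 x hx).deriv, (ha2 x hx).deriv, (ha x hx).deriv, (hb x hx).deriv,
    (hc x hx).deriv, (hq x hx).deriv]
  ring

section MomentDeriv

/-- The right-hand side of `∂ₓ Hₙ = momentDeriv σ₂ γ H₀ Hₙ Hₙ₊₁`, over any ring so that it serves
both for operators on `ℂ^d` and for matrices. -/
def momentDeriv {R : Type*} [Ring R] (σ γ H₀ H H' : R) : R :=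
  ⁅σ, H'⁆ + ⁅γ, H⁆ + ⁅σ, H₀⁆ * H

theorem map_momentDeriv {R S F : Type*} [Ring R] [Ring S] [FunLike F R S] [RingHomClass F R S]
    (f : F) (σ γ H₀ H H' : R) :
    f (momentDeriv σ γ H₀ H H') = momentDeriv (f σ) (f γ) (f H₀) (f H) (f H') := by
  simp only [momentDeriv, Ring.lie_def, map_add, map_sub, map_mul]

variable (γ11 γ12 γ21 : ℂ) (P M N : Matrix (Fin 2) (Fin 2) ℂ)

local notation "σKdV" => (!![0, 0; 1, 0] : Matrix (Fin 2) (Fin 2) ℂ)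
local notation "γKdV" => !![γ11, γ12; γ21, -γ11]

theorem momentDeriv_kdv_zero_zero :
    momentDeriv σKdV γKdV P M N 0 0 = -N 0 1 + γ12 * M 1 0 - γ21 * M 0 1 - P 0 1 * M 0 0 := by
  simp only [momentDeriv, Ring.lie_def, Matrix.add_apply, Matrix.sub_apply, Matrix.mul_apply,
    Fin.sum_univ_two, Matrix.of_apply, Matrix.cons_val', Matrix.cons_val_zero,
    Matrix.cons_val_one, Matrix.cons_val_fin_one, Matrix.empty_val']
  ring

theorem momentDeriv_kdv_zero_one :
    momentDeriv σKdV γKdV P M N 0 1 =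
      2 * γ11 * M 0 1 + γ12 * (M 1 1 - M 0 0) - P 0 1 * M 0 1 := by
  simp only [momentDeriv, Ring.lie_def, Matrix.add_apply, Matrix.sub_apply, Matrix.mul_apply,
    Fin.sum_univ_two, Matrix.of_apply, Matrix.cons_val', Matrix.cons_val_zero,
    Matrix.cons_val_one, Matrix.cons_val_fin_one, Matrix.empty_val']
  ring

theorem momentDeriv_kdv_one_zero :
    momentDeriv σKdV γKdV P M N 1 0 = N 0 0 - N 1 1 + γ21 * (M 0 0 - M 1 1) - 2 * γ11 * M 1 0
      + (P 0 0 - P 1 1) * M 0 0 + P 0 1 * M 1 0 := by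
  simp only [momentDeriv, Ring.lie_def, Matrix.add_apply, Matrix.sub_apply, Matrix.mul_apply,
    Fin.sum_univ_two, Matrix.of_apply, Matrix.cons_val', Matrix.cons_val_zero,
    Matrix.cons_val_one, Matrix.cons_val_fin_one, Matrix.empty_val']
  ring

end MomentDeriv

section Coefficients

variable {d : ℕ}

theorem m2c_one : m2c (1 : Matrix (Fin d) (Fin d) ℂ) = 1 := map_one _

theorem hasDerivAt_c2m_apply {F : ℝ → Ed d →L[ℂ] Ed d} {F' : Ed d →L[ℂ] Ed d} {x : ℝ}
    (h : HasDerivAt F F' x) (i j : Fin d) :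
    HasDerivAt (fun y => c2m (F y) i j) (c2m F' i j) x :=
  let entry : (Ed d →L[ℂ] Ed d) →ₗ[ℂ] ℂ :=
    Matrix.entryLinearMap ℂ ℂ i j ∘ₗ (Matrix.toEuclideanCLM (𝕜 := ℂ)).symm.toAlgEquiv.toLinearMap
  (LinearMap.toContinuousLinearMap entry).restrictScalars ℝ |>.hasFDerivAt.comp_hasDerivAt x h

end Coefficients

theorem ContinuousLinearMap.pow_apply_self_apply {R M : Type*} [Semiring R] [TopologicalSpace M]
    [AddCommMonoid M] [Module R M] (T : M →L[R] M) (n : ℕ) (w : M) :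
    (T ^ n) (T w) = T ((T ^ n) w) := by
  rw [← mul_apply_eq_comp, ← mul_apply_eq_comp, ← pow_succ, ← pow_succ']

namespace Vessel

variable {K : Type*} [NormedAddCommGroup K] [InnerProductSpace ℂ K] [CompleteSpace K] {d : ℕ}
  (V : Vessel K d) {q : ℝ × ℝ}

def moment (n : ℕ) (q : ℝ × ℝ) : Ed d →L[ℂ] Ed d :=
  V.C q ∘L V.Xi q ∘L (V.A ^ n) ∘L V.B q

def momentDx (n : ℕ) (q : ℝ × ℝ) : Ed d →L[ℂ] Ed d :=
  momentDeriv (m2c V.σ2) (m2c V.γ) (V.moment 0 q) (V.moment n q) (V.moment (n + 1) q)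

theorem c2m_momentDx (n : ℕ) (q : ℝ × ℝ) :
    c2m (V.momentDx n q) = momentDeriv V.σ2 V.γ (V.H 0 q) (V.H n q) (V.H (n + 1) q) := by
  rw [momentDx, c2m, map_momentDeriv]
  simp only [m2c, StarAlgEquiv.symm_apply_apply]
  rfl

variable {V}

theorem Aζ_Xi_apply (hσ1 : V.σ1 = 1) (hq : q ∈ V.Ω) (w : K) :
    V.Aζ (V.Xi q w) = -V.Xi q (V.A w) - V.Xi q (V.B q (V.C q (V.Xi q w))) := by
  have h := congr(V.Xi q ($(V.eqLyap q hq) (V.Xi q w)))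
  have hXXi := congr($((V.hXinv q hq).1) w)
  have hXiX := congr($((V.hXinv q hq).2) (V.Aζ (V.Xi q w)))
  simp only [hσ1, m2c_one, add_apply, comp_apply, one_apply_eq_self, zero_apply, map_add,
    map_zero] at h hXXi hXiX
  rw [hXXi, hXiX] at h
  rw [← sub_eq_zero, ← h]
  abel

theorem pdx_B (hσ1 : V.σ1 = 1) (hq : q ∈ V.Ω) :
    pdx V.B q = -(V.A ∘L V.B q ∘L m2c V.σ2) - V.B q ∘L m2c V.γ := by
  have h := V.eqBx q hq
  rw [hσ1, m2c_one, one_def, comp_id] at h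
  rw [← sub_eq_zero, ← h]
  abel

theorem pdx_C (hσ1 : V.σ1 = 1) (hq : q ∈ V.Ω) :
    pdx V.C q = m2c V.γ ∘L V.C q - m2c V.σ2 ∘L V.C q ∘L V.Aζ := by
  have h := V.eqCx q hq
  rw [hσ1, m2c_one, one_def, id_comp] at h
  rw [← sub_eq_zero, ← h]
  abel

theorem hasDerivAt_Xi_comp {φ : ℝ → ℝ × ℝ} {s : ℝ} (hφ : ContinuousAt φ s) (hs : φ s ∈ V.Ω)
    {X' : K →L[ℂ] K} (hX : HasDerivAt (fun s => V.X (φ s)) X' s) :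
    HasDerivAt (fun s => V.Xi (φ s)) (-(V.Xi (φ s) * X' * V.Xi (φ s))) s :=
  hX.of_eventually_inverse <|
    eventually_of_mem (hφ.preimage_mem_nhds (V.hΩ.mem_nhds hs)) fun _ hy => V.hXinv _ hy

theorem hasDerivAt_moment_comp (n : ℕ) {φ : ℝ → ℝ × ℝ} {s : ℝ} (hφ : ContinuousAt φ s)
    (hs : φ s ∈ V.Ω) {B' : Ed d →L[ℂ] K} {C' : K →L[ℂ] Ed d} {X' : K →L[ℂ] K}
    (hB : HasDerivAt (fun s => V.B (φ s)) B' s) (hC : HasDerivAt (fun s => V.C (φ s)) C' s)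
    (hX : HasDerivAt (fun s => V.X (φ s)) X' s) :
    HasDerivAt (fun s => V.moment n (φ s))
      (C' ∘L V.Xi (φ s) ∘L (V.A ^ n) ∘L V.B (φ s)
        - V.C (φ s) ∘L (V.Xi (φ s) * X' * V.Xi (φ s)) ∘L (V.A ^ n) ∘L V.B (φ s)
        + V.C (φ s) ∘L V.Xi (φ s) ∘L (V.A ^ n) ∘L B') s := by
  have h := hC.clm_comp_real <| (hasDerivAt_Xi_comp hφ hs hX).clm_comp_real <|
    (hasDerivAt_const s (V.A ^ n)).clm_comp_real hB
  refine h.congr_deriv ?_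
  ext1 v
  simp only [add_apply, sub_apply, comp_apply, neg_apply, zero_apply, map_add, map_neg, zero_add]
  abel

theorem differentiableAt_B_s18 (hq : q ∈ V.Ω) : DifferentiableAt ℝ V.B q :=
  (V.smoothB.differentiableOn two_ne_zero).differentiableAt (V.hΩ.mem_nhds hq)

theorem differentiableAt_C_s18 (hq : q ∈ V.Ω) : DifferentiableAt ℝ V.C q :=
  (V.smoothC.differentiableOn two_ne_zero).differentiableAt (V.hΩ.mem_nhds hq)

theorem differentiableAt_X_s18 (hq : q ∈ V.Ω) : DifferentiableAt ℝ V.X q :=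
  (V.smoothX.differentiableOn two_ne_zero).differentiableAt (V.hΩ.mem_nhds hq)

theorem hasDerivAt_moment_fst (hσ1 : V.σ1 = 1) (n : ℕ) (hq : q ∈ V.Ω) :
    HasDerivAt (fun x => V.moment n (x, q.2)) (V.momentDx n q) q.1 := by
  have hB := (V.differentiableAt_B_s18 hq).hasDerivAt_pdx
  have hC := (V.differentiableAt_C_s18 hq).hasDerivAt_pdx
  have hX := (V.differentiableAt_X_s18 hq).hasDerivAt_pdx
  rw [pdx_B hσ1 hq] at hB
  rw [pdx_C hσ1 hq] at hC
  rw [V.eqXx q hq] at hX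
  refine (hasDerivAt_moment_comp n (by fun_prop) hq hB hC hX).congr_deriv ?_
  ext1 v
  simp only [momentDx, momentDeriv, moment, Ring.lie_def, add_apply, sub_apply, mul_apply_eq_comp,
    comp_apply, neg_apply, map_sub, map_neg, pow_succ', pow_zero, one_apply_eq_self,
    pow_apply_self_apply, Aζ_Xi_apply hσ1 hq, Prod.mk.eta]
  abel

theorem hasDerivAt_moment_snd (hσ1 : V.σ1 = 1) (n : ℕ) (hq : q ∈ V.Ω) :
    HasDerivAt (fun t => V.moment n (q.1, t))
      (Complex.I • (V.momentDx (n + 1) q + V.momentDx 0 q * V.moment n q)) q.2 := by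
  have hB := (V.differentiableAt_B_s18 hq).hasDerivAt_pdt
  have hC := (V.differentiableAt_C_s18 hq).hasDerivAt_pdt
  have hX := (V.differentiableAt_X_s18 hq).hasDerivAt_pdt
  rw [V.eqBt q hq, pdx_B hσ1 hq] at hB
  rw [V.eqCt q hq, pdx_C hσ1 hq] at hC
  rw [V.eqXt q hq] at hX
  refine (hasDerivAt_moment_comp n (by fun_prop) hq hB hC hX).congr_deriv ?_
  ext1 v
  simp only [momentDx, momentDeriv, moment, Ring.lie_def, add_apply, sub_apply, smul_apply,
    mul_apply_eq_comp, comp_apply, neg_apply, map_add, map_sub, map_neg, map_smul, pow_succ',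
    pow_zero, one_apply_eq_self, pow_apply_self_apply, Aζ_Xi_apply hσ1 hq, Prod.mk.eta]
  module

theorem hasDerivAt_H_apply_fst (hσ1 : V.σ1 = 1) (n : ℕ) (i j : Fin d) (hq : q ∈ V.Ω) :
    HasDerivAt (fun x => V.H n (x, q.2) i j)
      (momentDeriv V.σ2 V.γ (V.H 0 q) (V.H n q) (V.H (n + 1) q) i j) q.1 := by
  have h := hasDerivAt_c2m_apply (V.hasDerivAt_moment_fst hσ1 n hq) i j
  rwa [c2m_momentDx] at h

theorem pdx_H_apply (hσ1 : V.σ1 = 1) (n : ℕ) (i j : Fin d) (hq : q ∈ V.Ω) :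
    pdx (fun q => V.H n q i j) q = momentDeriv V.σ2 V.γ (V.H 0 q) (V.H n q) (V.H (n + 1) q) i j :=
  (V.hasDerivAt_H_apply_fst hσ1 n i j hq).deriv

theorem pdt_H_apply (hσ1 : V.σ1 = 1) (n : ℕ) (i j : Fin d) (hq : q ∈ V.Ω) :
    pdt (fun q => V.H n q i j) q =
      (Complex.I • (momentDeriv V.σ2 V.γ (V.H 0 q) (V.H (n + 1) q) (V.H (n + 2) q)
        + momentDeriv V.σ2 V.γ (V.H 0 q) (V.H 0 q) (V.H 1 q) * V.H n q)) i j := by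
  have h := hasDerivAt_c2m_apply (V.hasDerivAt_moment_snd hσ1 n hq) i j
  rw [c2m, map_smul, map_add, map_mul, ← c2m, ← c2m, ← c2m, c2m_momentDx, c2m_momentDx] at h
  exact h.deriv

end Vessel

namespace Vessel

variable {K : Type*} [NormedAddCommGroup K] [InnerProductSpace ℂ K] [CompleteSpace K]
  {V : Vessel K 2} {γ11 γ12 γ21 : ℂ} {p : ℝ × ℝ}

theorem pdt_H_zero_one (hσ1 : V.σ1 = 1) (hnorm : ∀ q ∈ V.Ω, V.H 0 q 0 0 + V.H 0 q 1 1 = 0)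
    (hp : p ∈ V.Ω) :
    pdt (fun q => V.H 0 q 0 1) p = Complex.I * (pdx (fun q => V.H 1 q 0 1) p
      + pdx (fun q => V.H 0 q 0 0) p * V.H 0 p 0 1
      - V.H 0 p 0 0 * pdx (fun q => V.H 0 q 0 1) p) := by
  rw [pdt_H_apply hσ1 0 0 1 hp, pdx_H_apply hσ1 1 0 1 hp, pdx_H_apply hσ1 0 0 0 hp,
    pdx_H_apply hσ1 0 0 1 hp]
  simp only [Matrix.smul_apply, Matrix.add_apply, Matrix.mul_apply, Fin.sum_univ_two,
    smul_eq_mul, show V.H 0 p 1 1 = -V.H 0 p 0 0 by linear_combination hnorm p hp]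
  ring

theorem pdx_pdx_pdx_H_zero_one (hσ1 : V.σ1 = 1) (hσ2 : V.σ2 = !![0, 0; 1, 0])
    (hγ : V.γ = !![γ11, γ12; γ21, -γ11]) (hnorm : ∀ q ∈ V.Ω, V.H 0 q 0 0 + V.H 0 q 1 1 = 0)
    (hp : p ∈ V.Ω) :
    pdx (pdx (pdx fun q => V.H 0 q 0 1)) p =
      4 * (γ11 ^ 2 + γ12 * γ21) * pdx (fun q => V.H 0 q 0 1) p
        - 6 * pdx (fun q => V.H 0 q 0 1) p ^ 2
        + 4 * γ12 * (pdx (fun q => V.H 1 q 0 1) p + pdx (fun q => V.H 0 q 0 0) p * V.H 0 p 0 1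
          - V.H 0 p 0 0 * pdx (fun q => V.H 0 q 0 1) p) := by
  obtain ⟨x, t⟩ := p
  have hH11 (y : ℝ) (hy : (y, t) ∈ V.Ω) : V.H 0 (y, t) 1 1 = -V.H 0 (y, t) 0 0 := by
    linear_combination hnorm _ hy
  have hx (y : ℝ) (hy : (y, t) ∈ V.Ω) (n : ℕ) (i j : Fin 2) : HasDerivAt (fun z => V.H n (z, t) i j)
      (momentDeriv V.σ2 V.γ (V.H 0 (y, t)) (V.H n (y, t)) (V.H (n + 1) (y, t)) i j) y :=
    V.hasDerivAt_H_apply_fst (q := (y, t)) hσ1 n i j hy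
  exact deriv_deriv_deriv_eq_of_moment_system (U := {y | (y, t) ∈ V.Ω})
    (V.hΩ.preimage (by fun_prop)) hp
    (a := fun y => V.H 0 (y, t) 0 0) (b := fun y => V.H 0 (y, t) 0 1)
    (c := fun y => V.H 0 (y, t) 1 0) (q := fun y => V.H 1 (y, t) 0 1)
    (r := fun y => V.H 1 (y, t) 0 0 - V.H 1 (y, t) 1 1)
    (fun y hy => (hx y hy 0 0 0).congr_deriv (by rw [hσ2, hγ, momentDeriv_kdv_zero_zero]))
    (fun y hy => (hx y hy 0 0 1).congr_deriv
      (by rw [hσ2, hγ, momentDeriv_kdv_zero_one, hH11 y hy]; ring))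
    (fun y hy => (hx y hy 0 1 0).congr_deriv
      (by rw [hσ2, hγ, momentDeriv_kdv_one_zero, hH11 y hy]; ring))
    (fun y hy => (hx y hy 1 0 1).congr_deriv (by rw [hσ2, hγ, momentDeriv_kdv_zero_one]; ring))

end Vessel

theorem generalized_KdV_equation_general {K : Type*} [NormedAddCommGroup K]
    [InnerProductSpace ℂ K] [CompleteSpace K]
    (V : Vessel K 2) (γ11 γ12 γ21 : ℂ)
    (hσ1 : V.σ1 = 1) (hσ2 : V.σ2 = !![0, 0; 1, 0])
    (hγ : V.γ = !![γ11, γ12; γ21, -γ11])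
    (hnorm : ∀ q ∈ V.Ω, V.H 0 q 0 0 + V.H 0 q 1 1 = 0)
    (h12 : ℝ × ℝ → ℂ) (hh12 : h12 = fun q => V.H 0 q 0 1) :
    ∀ p ∈ V.Ω,
      4 * Complex.I * γ12 * pdt h12 p =
        4 * (γ11 ^ 2 + γ12 * γ21) * pdx h12 p - 6 * (pdx h12 p) ^ 2 -
          pdx (pdx (pdx h12)) p := by
  intro p hp
  subst hh12
  rw [Vessel.pdt_H_zero_one hσ1 hnorm hp, Vessel.pdx_pdx_pdx_H_zero_one hσ1 hσ2 hγ hnorm hp]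
  ring_nf
  rw [Complex.I_sq]
  ring

/-- the `(1,2)` entry of the first moment of a vessel with generalized
KdV parameters satisfies the generalized KdV equation. -/
theorem generalized_KdV_equation {K : Type*} [NormedAddCommGroup K]
    [InnerProductSpace ℂ K] [CompleteSpace K]
    (V : Vessel K 2) (γ11 γ12 γ21 : ℂ) (hγ12 : γ12 ≠ 0)
    (hσ1 : V.σ1 = 1) (hσ2 : V.σ2 = !![0, 0; 1, 0])
    (hγ : V.γ = !![γ11, γ12; γ21, -γ11])
    (hsmB : ContDiffOn ℝ 4 V.B V.Ω) (hsmC : ContDiffOn ℝ 4 V.C V.Ω)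
    (hsmX : ContDiffOn ℝ 4 V.X V.Ω)
    (hnorm : ∀ q ∈ V.Ω, V.H 0 q 0 0 + V.H 0 q 1 1 = 0)
    (h12 : ℝ × ℝ → ℂ) (hh12 : h12 = fun q => V.H 0 q 0 1) :
    ∀ p ∈ V.Ω,
      4 * Complex.I * γ12 * pdt h12 p =
        4 * (γ11 ^ 2 + γ12 * γ21) * pdx h12 p - 6 * (pdx h12 p) ^ 2 -
          pdx (pdx (pdx h12)) p :=
  generalized_KdV_equation_general V γ11 γ12 γ21 hσ1 hσ2 hγ hnorm h12 hh12
end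
end
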